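/- For every integer n ≥ 1: (i) for every integer k ≥ 0, A(n,k) = ((2n)!/(2^{2n}·6^{n})) · ∑_{l=1}^{n} l · C(k,l) · P(n+1−l, n); and (ii) for every integer l with 1 ≤ l ≤ n, P(n+1−l, n) = (2^{2n}·6^{n}·(−1)^{l}/(l·(2n)!)) · ∑_{k=1}^{l} (−1)^{k} · C(l,k) · A(n,k). -/

import Mathlib

/-- `A(n,k) := (2·(2n)!/(2n+k)!) · ∑_{j=0}^{⌊k/2⌋} (−1)^j · C(k,j) · (k/2 − j)^{k+2n}` in `ℚ`. -/
def A (n k : ℕ) : ℚ :=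
  (2 * (Nat.factorial (2 * n) : ℚ) / (Nat.factorial (2 * n + k) : ℚ)) *
    ∑ j ∈ Finset.range (k / 2 + 1),
      (-1 : ℚ) ^ j * (Nat.choose k j : ℚ) * ((k : ℚ) / 2 - (j : ℚ)) ^ (k + 2 * n)

/-- Riordan's coefficients `a(n,l)`: `a(0,0) = 1`, `a(n,0) = 0` for `n ≥ 1`, and for `l ≥ 1`,
`a(n,l) = ∑_{i=l−1}^{n−1} a(i,l−1) · C(2n+l−1, 2n−2i)`. -/
def a : ℕ → ℕ → ℚ
  | 0, 0 => 1
  | _ + 1, 0 => 0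
  | n, l + 1 => ∑ i ∈ Finset.Ico l n, a i l * (Nat.choose (2 * n + l) (2 * n - 2 * i) : ℚ)

/-- The P-polynomial values `P(j,n) := 6^n · a(n, n+1−j) / ((2n)! · (n+1−j) · C(3n+1−j, 2n))`
(for `1 ≤ j ≤ n`). -/
def P (j n : ℕ) : ℚ :=
  6 ^ n * a n (n + 1 - j) /
    ((Nat.factorial (2 * n) : ℚ) * ((n + 1 - j : ℕ) : ℚ) *
      (Nat.choose (3 * n + 1 - j) (2 * n) : ℚ))

/-! The coefficients `a(n,l)` are those of the exponential generating function of
`(sinh x - x)^l / l!`, namely `(sinh x - x)^l / l! = ∑ₙ a(n,l) x^(2n+l) / (2n+l)!`: the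
recurrence defining `a` is the coefficient form of
`d/dx (sinh x - x)^(l+1) = (l+1) (sinh x - x)^l (cosh x - 1)`.
The summand of `A(n,k)` is symmetric under `j ↦ k - j`, so `A(n,k)` is `(2n)!` times the
coefficient of `x^(2n+k)` in `(e^(x/2) - e^(-x/2))^k = (2 sinh (x/2))^k`. Expanding
`sinh x = x + (sinh x - x)` binomially gives (i), which writes `A(n,k)` in the basis `C(k,l)`;
(ii) is binomial inversion. -/

open Finset

lemma neg_one_pow_tsub {R : Type*} [Ring R] {j k : ℕ} (h : j ≤ k) :
    (-1 : R) ^ (k - j) = (-1) ^ k * (-1) ^ j := by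
  rw [← Nat.sub_add_cancel h, pow_add, Nat.add_sub_cancel, mul_assoc, ← pow_add,
    Even.neg_one_pow ⟨j, rfl⟩, mul_one]

lemma sum_range_succ_eq_two_nsmul_sum_half {M : Type*} [AddCommMonoid M] (k : ℕ) (f : ℕ → M)
    (h_symm : ∀ j ≤ k, f (k - j) = f j) (h_mid : ∀ j, 2 * j = k → f j = 0) :
    ∑ j ∈ range (k + 1), f j = 2 • ∑ j ∈ range (k / 2 + 1), f j := by
  have h_upper :
      ∑ i ∈ range (k - k / 2), f (k / 2 + 1 + i) = ∑ j ∈ range (k - k / 2), f j := by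
    rw [← sum_range_reflect f]
    refine sum_congr rfl fun i hi => ?_
    rw [mem_range] at hi
    rw [← h_symm _ (by omega)]
    congr 1
    omega
  rw [show k + 1 = (k / 2 + 1) + (k - k / 2) by omega, sum_range_add, h_upper, two_nsmul]
  congr 1
  rcases Nat.even_or_odd k with ⟨t, rfl⟩ | ⟨t, rfl⟩
  · rw [show t + t - (t + t) / 2 = t by omega, show (t + t) / 2 = t by omega, sum_range_succ,
      h_mid t (by omega), add_zero]
  · rw [show 2 * t + 1 - (2 * t + 1) / 2 = (2 * t + 1) / 2 + 1 by omega]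

lemma sum_neg_one_pow_mul_choose_mul_choose (l m : ℕ) :
    ∑ k ∈ range (l + 1), (-1 : ℤ) ^ k * l.choose k * k.choose m =
      if l = m then (-1) ^ l else 0 := by
  have h := fwdDiff_iter_choose_zero m l
  rw [fwdDiff_iter_eq_sum_shift] at h
  simp only [zero_add, smul_eq_mul, mul_one] at h
  rw [← mul_boole, ← h, mul_sum]
  refine sum_congr rfl fun k hk => ?_
  rw [neg_one_pow_tsub (Nat.lt_succ_iff.mp (mem_range.mp hk)), ← mul_assoc, ← mul_assoc,
    ← mul_assoc, ← pow_add, Even.neg_one_pow ⟨l, rfl⟩, one_mul]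

lemma sum_neg_one_pow_mul_choose_mul_sum_choose {R : Type*} [CommRing R] (g : ℕ → R)
    (s : Finset ℕ) (l : ℕ) :
    ∑ k ∈ range (l + 1), (-1 : R) ^ k * l.choose k * ∑ m ∈ s, (k.choose m : R) * g m =
      if l ∈ s then (-1) ^ l * g l else 0 := by
  simp_rw [mul_sum, ← mul_assoc]
  rw [sum_comm]
  simp_rw [← sum_mul]
  have h (m : ℕ) : ∑ k ∈ range (l + 1), (-1 : R) ^ k * l.choose k * k.choose m =
      if l = m then (-1) ^ l else 0 := by
    exact_mod_cast congrArg (Int.cast : ℤ → R) (sum_neg_one_pow_mul_choose_mul_choose l m)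
  simp_rw [h, ite_mul, zero_mul, sum_ite_eq]

open PowerSeries Nat

lemma coeff_rescale_exp (c : ℚ) (m : ℕ) : coeff m (rescale c (exp ℚ)) = c ^ m / m ! := by
  simp [coeff_rescale, coeff_exp, div_eq_mul_inv]

lemma rescale_exp_pow (c : ℚ) (j : ℕ) :
    rescale c (exp ℚ) ^ j = rescale (j * c) (exp ℚ) := by
  rw [← map_pow, exp_pow_eq_rescale_exp, rescale_rescale]

lemma factorial_mul_coeff_rescale_exp_sub_pow (x y : ℚ) (k m : ℕ) :
    m ! * coeff m ((rescale x (exp ℚ) - rescale y (exp ℚ)) ^ k) =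
      ∑ j ∈ range (k + 1), (-1) ^ j * k.choose j * (j * y + (k - j : ℕ) * x) ^ m := by
  rw [sub_eq_neg_add, add_pow, map_sum, mul_sum]
  refine sum_congr rfl fun j _ => ?_
  have h_term :
      (-rescale y (exp ℚ)) ^ j * rescale x (exp ℚ) ^ (k - j) * (k.choose j : ℚ⟦X⟧) =
      C ((-1 : ℚ) ^ j * k.choose j) * rescale (j * y + (k - j : ℕ) * x) (exp ℚ) := by
    rw [neg_pow, rescale_exp_pow, rescale_exp_pow, ← exp_mul_exp_eq_exp_add, map_mul, map_pow,
      map_neg, map_one, map_natCast]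
    ring
  rw [h_term, coeff_C_mul, coeff_rescale_exp]
  field_simp

noncomputable def sinhSeries : ℚ⟦X⟧ := mk fun m => if Odd m then (m ! : ℚ)⁻¹ else 0

lemma exp_sub_rescale_neg_one_exp : exp ℚ - rescale (-1) (exp ℚ) = C 2 * sinhSeries := by
  ext m
  rcases Nat.even_or_odd m with hm | hm
  · simp [sinhSeries, coeff_exp, coeff_rescale, hm.neg_one_pow, Nat.not_odd_iff_even.mpr hm]
  · simp [sinhSeries, coeff_exp, coeff_rescale, hm.neg_one_pow, hm, ← two_mul]

lemma X_dvd_sinhSeries_sub_X : X ∣ sinhSeries - X := by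
  simp [X_dvd_iff, sinhSeries]

lemma coeff_derivative_sinhSeries_sub_X (j : ℕ) :
    coeff j (d⁄dX ℚ (sinhSeries - X)) = if Even j ∧ j ≠ 0 then (j ! : ℚ)⁻¹ else 0 := by
  rw [coeff_derivative, map_sub, coeff_X, sinhSeries, coeff_mk]
  rcases eq_or_ne j 0 with rfl | h0
  · simp
  rcases Nat.even_or_odd j with hj | hj
  · simp [hj, hj.add_one, h0, Nat.factorial_succ, Nat.cast_add_one_ne_zero]
  · simp [Nat.not_even_iff_odd.mpr hj, Nat.not_odd_iff_even.mpr hj.add_one, h0]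

lemma coeff_mul_derivative_sinhSeries_sub_X {f : ℚ⟦X⟧} {l : ℕ} (hf : X ^ l ∣ f)
    (n : ℕ) :
    coeff (2 * n + l) (f * d⁄dX ℚ (sinhSeries - X)) =
      ∑ i ∈ range n, coeff (2 * i + l) f / (2 * n - 2 * i) ! := by
  rw [X_pow_dvd_iff] at hf
  rw [coeff_mul]
  symm
  refine sum_bij_ne_zero (fun i _ _ => (2 * i + l, 2 * n - 2 * i)) ?_ ?_ ?_ ?_
  · intro i hi _
    rw [mem_range] at hi
    rw [HasAntidiagonal.mem_antidiagonal]
    omega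
  · intro i _ _ j _ _ h
    simp only [Prod.mk.injEq] at h
    omega
  · rintro ⟨p, q⟩ hpq hne
    rw [HasAntidiagonal.mem_antidiagonal] at hpq
    have hp : l ≤ p := by
      by_contra! hp
      exact hne (by rw [hf p hp, zero_mul])
    obtain ⟨⟨s, rfl⟩, hs⟩ : Even q ∧ q ≠ 0 := by
      by_contra hq
      exact hne (by rw [coeff_derivative_sinhSeries_sub_X, if_neg hq, mul_zero])
    refine ⟨n - s, mem_range.mpr (by omega), ?_, ?_⟩
    · rw [show 2 * (n - s) + l = p by omega]
      exact div_ne_zero (left_ne_zero_of_mul hne) (by positivity)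
    · simp only [Prod.mk.injEq]
      omega
  · intro i hi _
    rw [mem_range] at hi
    rw [coeff_derivative_sinhSeries_sub_X, if_pos ⟨⟨n - i, by omega⟩, by omega⟩,
      div_eq_mul_inv]

lemma a_eq_zero_of_lt {n l : ℕ} (h : n < l) : a n l = 0 := by
  obtain ⟨l, rfl⟩ : ∃ l', l = l' + 1 := ⟨l - 1, by omega⟩
  rw [a, Ico_eq_empty (by omega), sum_empty]

lemma a_succ_eq_sum_range (n l : ℕ) :
    a n (l + 1) = ∑ i ∈ range n, a i l * (2 * n + l).choose (2 * n - 2 * i) := by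
  rw [a]
  refine sum_subset (fun i hi => ?_) (fun i _ hi => ?_)
  · rw [mem_Ico] at hi
    exact mem_range.mpr hi.2
  · rw [a_eq_zero_of_lt (by simp_all), zero_mul]

lemma coeff_sinhSeries_sub_X_pow (l n : ℕ) :
    coeff (2 * n + l) ((sinhSeries - X) ^ l) = a n l * l ! / (2 * n + l) ! := by
  induction l generalizing n with
  | zero => cases n <;> simp [a, coeff_one]
  | succ l ih =>
    have h_deriv :
        coeff (2 * n + l + 1) ((sinhSeries - X) ^ (l + 1)) * ((2 * n + l : ℕ) + 1 : ℚ) =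
          ((l + 1 : ℕ) : ℚ) *
            coeff (2 * n + l) ((sinhSeries - X) ^ l * d⁄dX ℚ (sinhSeries - X)) := by
      rw [← coeff_derivative, derivative_pow, Nat.add_sub_cancel, mul_assoc,
        ← map_natCast (C (R := ℚ)), coeff_C_mul]
    simp_rw [coeff_mul_derivative_sinhSeries_sub_X (pow_dvd_pow_of_dvd X_dvd_sinhSeries_sub_X l),
      ih] at h_deriv
    rw [← add_assoc, eq_div_of_mul_eq (by positivity) h_deriv, a_succ_eq_sum_range, mul_sum,
      sum_div, sum_mul, sum_div]
    refine sum_congr rfl fun i hi => ?_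
    rw [mem_range] at hi
    rw [Nat.cast_choose ℚ (by omega : 2 * n - 2 * i ≤ 2 * n + l),
      show 2 * n + l - (2 * n - 2 * i) = 2 * i + l by omega, Nat.factorial_succ (2 * n + l),
      Nat.factorial_succ l]
    push_cast
    field_simp

lemma coeff_sinhSeries_pow (n k : ℕ) :
    coeff (2 * n + k) (sinhSeries ^ k) =
      ∑ l ∈ range (k + 1), k.choose l * (a n l * l ! / (2 * n + l) !) := by
  rw [← sub_add_cancel sinhSeries X, add_pow, map_sum]
  refine sum_congr rfl fun l hl => ?_
  rw [mem_range] at hl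
  rw [← map_natCast (C (R := ℚ)), coeff_mul_C, coeff_mul_X_pow', if_pos (by omega),
    show 2 * n + k - (k - l) = 2 * n + l by omega, coeff_sinhSeries_sub_X_pow, mul_comm]

lemma rescale_half_exp_sub_rescale_neg_half_exp :
    rescale (1 / 2) (exp ℚ) - rescale (-(1 / 2)) (exp ℚ) =
      rescale (1 / 2) (C 2 * sinhSeries) := by
  rw [← exp_sub_rescale_neg_one_exp, map_sub, rescale_rescale]
  norm_num

lemma A_eq_sum_range (n k : ℕ) (hn : 1 ≤ n) :
    A n k =
      (2 * n) ! / 4 ^ n * ∑ l ∈ range (k + 1), k.choose l * (a n l * l ! / (2 * n + l) !) := by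
  set T : ℕ → ℚ := fun j => (-1) ^ j * k.choose j * ((k : ℚ) / 2 - j) ^ (k + 2 * n) with hT
  have h_half : ∑ j ∈ range (k + 1), T j = 2 • ∑ j ∈ range (k / 2 + 1), T j := by
    refine sum_range_succ_eq_two_nsmul_sum_half k T (fun j hj => ?_) (fun j hj => ?_)
    · have h_sq : (-1 : ℚ) ^ k * (-1) ^ k = 1 := by rw [← mul_pow]; norm_num
      simp only [hT]
      rw [Nat.choose_symm hj, Nat.cast_sub hj, neg_one_pow_tsub hj,
        show (k : ℚ) / 2 - (k - j : ℚ) = -1 * (k / 2 - j) by ring, mul_pow,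
        pow_add (-1 : ℚ) k, pow_mul, neg_one_sq, one_pow]
      linear_combination (-1 : ℚ) ^ j * k.choose j * ((k : ℚ) / 2 - j) ^ (k + 2 * n) * h_sq
    · simp only [hT]
      rw [show (k : ℚ) / 2 - j = 0 by rw [← hj]; push_cast; ring, zero_pow (by omega), mul_zero]
  have h_full : ∑ j ∈ range (k + 1), T j = (2 * n + k) ! *
      coeff (2 * n + k) ((rescale (1 / 2) (exp ℚ) - rescale (-(1 / 2)) (exp ℚ)) ^ k) := by
    rw [factorial_mul_coeff_rescale_exp_sub_pow]
    refine sum_congr rfl fun j hj => ?_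
    rw [hT, Nat.cast_sub (Nat.lt_succ_iff.mp (mem_range.mp hj)), add_comm (2 * n)]
    ring
  rw [rescale_half_exp_sub_rescale_neg_half_exp, ← map_pow, coeff_rescale, mul_pow, ← map_pow,
    coeff_C_mul, coeff_sinhSeries_pow] at h_full
  have h4 : (4 : ℚ) ^ n = 2 ^ (2 * n) := by rw [pow_mul]; norm_num
  rw [two_nsmul, ← two_mul] at h_half
  calc A n k = (2 * n) ! / (2 * n + k) ! * (2 * ∑ j ∈ range (k / 2 + 1), T j) := by
        rw [A]; ring
    _ = _ := by
        rw [← h_half, h_full, h4, one_div, inv_pow, pow_add]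
        field_simp

lemma A_eq_sum_Icc (n k : ℕ) (hn : 1 ≤ n) :
    A n k = (2 * n) ! / 4 ^ n * ∑ l ∈ Icc 1 n, k.choose l * (a n l * l ! / (2 * n + l) !) := by
  rw [A_eq_sum_range n k hn]
  congr 1
  refine sum_congr_of_eq_on_inter (fun l _ hl => ?_) (fun l _ hl => ?_) (fun _ _ _ => rfl)
  · rw [mem_Icc, not_and_or, not_le, not_le] at hl
    rcases hl with hl | hl
    · obtain ⟨m, rfl⟩ := Nat.exists_eq_add_of_le' hn
      rw [Nat.lt_one_iff.mp hl, show a (m + 1) 0 = 0 from rfl, zero_mul, zero_div, mul_zero]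
    · rw [a_eq_zero_of_lt hl, zero_mul, zero_div, mul_zero]
  · rw [mem_range, not_lt] at hl
    rw [Nat.choose_eq_zero_of_lt hl, Nat.cast_zero, zero_mul]

lemma natCast_mul_P {n l : ℕ} (hl : 1 ≤ l) (hln : l ≤ n) :
    l * P (n + 1 - l) n = 6 ^ n * (a n l * l ! / (2 * n + l) !) := by
  rw [P, show n + 1 - (n + 1 - l) = l by omega, show 3 * n + 1 - (n + 1 - l) = 2 * n + l by omega,
    Nat.cast_choose ℚ (by omega : 2 * n ≤ 2 * n + l), show 2 * n + l - 2 * n = l by omega]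
  field_simp

lemma A_eq_sum_mul_choose_mul_P (n k : ℕ) (hn : 1 ≤ n) :
    A n k = (2 * n) ! / (2 ^ (2 * n) * 6 ^ n) *
      ∑ l ∈ Icc 1 n, k.choose l * ((l : ℚ) * P (n + 1 - l) n) := by
  rw [A_eq_sum_Icc n k hn, mul_sum, mul_sum]
  refine sum_congr rfl fun l hl => ?_
  rw [mem_Icc] at hl
  rw [natCast_mul_P hl.1 hl.2, pow_mul]
  field_simp
  norm_num
  ring

lemma P_eq_sum_neg_one_pow_mul_choose_mul_A (n l : ℕ) (hn : 1 ≤ n) (hl : 1 ≤ l)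
    (hln : l ≤ n) :
    P (n + 1 - l) n = 2 ^ (2 * n) * 6 ^ n * (-1) ^ l / (l * (2 * n) !) *
      ∑ k ∈ Icc 1 l, (-1) ^ k * l.choose k * A n k := by
  have h_A0 : A n 0 = 0 := by
    rw [A_eq_sum_Icc n 0 hn, sum_eq_zero fun m hm => by
      rw [Nat.choose_eq_zero_of_lt (mem_Icc.mp hm).1, Nat.cast_zero, zero_mul], mul_zero]
  have h_sum : ∑ k ∈ Icc 1 l, (-1 : ℚ) ^ k * l.choose k * A n k =
      ∑ k ∈ range (l + 1), (-1 : ℚ) ^ k * l.choose k * A n k := by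
    refine sum_subset (fun k hk => ?_) (fun k hk hk' => ?_)
    · rw [mem_Icc] at hk
      exact mem_range.mpr (by omega)
    · rw [mem_range] at hk
      rw [mem_Icc] at hk'
      rw [show k = 0 by omega, h_A0, mul_zero]
  simp_rw [h_sum, A_eq_sum_mul_choose_mul_P n _ hn, mul_left_comm _ ((2 * n) ! / _ : ℚ),
    ← mul_sum, sum_neg_one_pow_mul_choose_mul_sum_choose, if_pos (mem_Icc.mpr ⟨hl, hln⟩)]
  field_simp
  rw [← pow_mul, Even.neg_one_pow ⟨l, by ring⟩, mul_one]

/-- For every `n ≥ 1`: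
(i) for every `k ≥ 0`, `A(n,k) = ((2n)!/(2^{2n}·6^n)) · ∑_{l=1}^{n} l · C(k,l) · P(n+1−l, n)`;
(ii) for every `1 ≤ l ≤ n`,
`P(n+1−l, n) = (2^{2n}·6^n·(−1)^l/(l·(2n)!)) · ∑_{k=1}^{l} (−1)^k · C(l,k) · A(n,k)`. -/
theorem A_P_inversion (n : ℕ) (hn : 1 ≤ n) :
    (∀ k : ℕ,
      A n k = ((Nat.factorial (2 * n) : ℚ) / (2 ^ (2 * n) * 6 ^ n)) *
        ∑ l ∈ Finset.Icc 1 n, (l : ℚ) * (Nat.choose k l : ℚ) * P (n + 1 - l) n) ∧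
    (∀ l : ℕ, 1 ≤ l → l ≤ n →
      P (n + 1 - l) n =
        ((2 : ℚ) ^ (2 * n) * 6 ^ n * (-1 : ℚ) ^ l / ((l : ℚ) * (Nat.factorial (2 * n) : ℚ))) *
          ∑ k ∈ Finset.Icc 1 l, (-1 : ℚ) ^ k * (Nat.choose l k : ℚ) * A n k) := by
  refine ⟨fun k => ?_, fun l => P_eq_sum_neg_one_pow_mul_choose_mul_A n l hn⟩
  rw [A_eq_sum_mul_choose_mul_P n k hn]
  exact congrArg _ (sum_congr rfl fun l _ => by ring)
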